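/- arXiv:2505.03006 — 2 statements merged into one kernel-verified Lean document; each statement's English description precedes it below -/
import Mathlib

section
/- The Macdonald function $K_0$ satisfies $K_0(x)\sim \sqrt{\pi/(2x)}\,e^{-x}$ as $x\to\infty$; that is, $\lim_{x\to\infty} K_0(x)\,e^{x}\sqrt{2x/\pi} = 1$. -/
open MeasureTheory Real Filter

/-- The Macdonald function (modified Bessel function of the second kind) of order `0`,
`K₀(x) = ∫_0^∞ exp(-x cosh t) dt`. -/
noncomputable def besselK0 (x : ℝ) : ℝ :=
  ∫ t in Set.Ioi (0 : ℝ), Real.exp (-(x * Real.cosh t))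

/-!
Substituting `u = √(2x) sinh (t / 2)` turns `x (cosh t - 1)` into `u²` and `dt` into
`(2 / √(2x)) du / √(1 + u² / (2x))`, so `K₀(x) eˣ √(2x) = 2 ∫₀^∞ e^{-u²} / √(1 + u² / (2x)) du`.
As `x → ∞` the integrand increases to `e^{-u²}`, dominated by itself, so the integral tends
to `√π / 2`.
-/

open Set Topology

lemma image_mul_sinh_half_Ioi {c : ℝ} (hc : 0 < c) :
    (fun t => c * sinh (t / 2)) '' Ioi 0 = Ioi 0 := by
  ext u
  constructor
  · rintro ⟨t, ht, rfl⟩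
    exact mul_pos hc (sinh_pos_iff.2 (half_pos ht))
  · intro hu
    refine ⟨2 * arsinh (u / c), ?_, ?_⟩
    · exact mul_pos two_pos (arsinh_pos_iff.2 (div_pos hu hc))
    · dsimp only
      rw [mul_div_cancel_left₀ _ (two_ne_zero (α := ℝ)), sinh_arsinh, mul_div_cancel₀ u hc.ne']

lemma sqrt_one_add_sinh_sq (y : ℝ) : √(1 + sinh y ^ 2) = cosh y := by
  rw [← cosh_sq', sqrt_sq (cosh_pos y).le]

lemma cosh_eq_one_add_two_mul_sinh_half_sq (t : ℝ) : cosh t = 1 + 2 * sinh (t / 2) ^ 2 := by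
  conv_lhs => rw [← mul_div_cancel₀ t two_ne_zero, cosh_two_mul, cosh_sq']
  ring

lemma besselK0_mul_exp_mul_sqrt {x : ℝ} (hx : 0 < x) :
    besselK0 x * exp x * √(2 * x) = 2 * ∫ u in Ioi 0, exp (-u ^ 2) / √(1 + u ^ 2 / (2 * x)) := by
  set c := √(2 * x)
  have hc : 0 < c := sqrt_pos.2 (by positivity)
  have hc2 : c ^ 2 = 2 * x := sq_sqrt (by positivity)
  have hderiv : ∀ t ∈ Ioi (0 : ℝ),
      HasDerivWithinAt (fun t => c * sinh (t / 2)) (c * (cosh (t / 2) / 2)) (Ioi 0) t :=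
    fun t _ => (((hasDerivAt_id' t).div_const 2).sinh.const_mul c).hasDerivWithinAt.congr_deriv
      (by ring)
  have hinj : InjOn (fun t => c * sinh (t / 2)) (Ioi 0) :=
    (sinh_strictMono.comp (strictMono_id.div_const two_pos)).const_mul hc |>.injective.injOn
  have hsubst := integral_image_eq_integral_abs_deriv_smul measurableSet_Ioi hderiv hinj
    (fun u => exp (-u ^ 2) / √(1 + u ^ 2 / (2 * x)))
  rw [image_mul_sinh_half_Ioi hc] at hsubst
  have hintegrand : ∀ t : ℝ, |c * (cosh (t / 2) / 2)| •
      (exp (-(c * sinh (t / 2)) ^ 2) / √(1 + (c * sinh (t / 2)) ^ 2 / (2 * x))) =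
      c / 2 * (exp (-(x * cosh t)) * exp x) := by
    intro t
    rw [abs_of_pos (by positivity), mul_pow, hc2,
      mul_div_cancel_left₀ _ (by positivity : 2 * x ≠ 0), sqrt_one_add_sinh_sq,
      cosh_eq_one_add_two_mul_sinh_half_sq t, ← exp_add, smul_eq_mul]
    field_simp
    congr 1
    ring
  simp_rw [hsubst, hintegrand, integral_const_mul, besselK0, integral_mul_const]
  field_simp

lemma tendsto_integral_exp_neg_sq_div_sqrt :
    Tendsto (fun y => ∫ u in Ioi 0, exp (-u ^ 2) / √(1 + u ^ 2 / y)) atTop (𝓝 (√π / 2)) := by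
  have hgauss : ∫ u in Ioi 0, exp (-u ^ 2) = √π / 2 := by
    simpa using integral_gaussian_Ioi 1
  rw [← hgauss]
  refine tendsto_integral_filter_of_dominated_convergence (fun u => exp (-u ^ 2)) ?_ ?_ ?_ ?_
  · filter_upwards [eventually_gt_atTop 0] with y hy
    exact (Continuous.div (by fun_prop) (by fun_prop) fun u => by positivity).aestronglyMeasurable
  · filter_upwards [eventually_gt_atTop 0] with y hy
    refine ae_of_all _ fun u => ?_
    rw [norm_of_nonneg (by positivity)]
    exact div_le_self (exp_pos _).le (one_le_sqrt.2 (le_add_of_nonneg_right (by positivity)))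
  · simpa using (integrable_exp_neg_mul_sq one_pos).restrict (s := Ioi 0)
  · refine ae_of_all _ fun u => ?_
    have h : Tendsto (fun y => 1 + u ^ 2 / y) atTop (𝓝 1) := by
      simpa using (tendsto_const_nhds (x := u ^ 2)).div_atTop tendsto_id |>.const_add 1
    have hquot := (tendsto_const_nhds (x := exp (-u ^ 2))).div h.sqrt (by simp)
    rwa [sqrt_one, div_one] at hquot

theorem besselK0_asymptotic_infty :
    Tendsto (fun x : ℝ => besselK0 x * Real.exp x * Real.sqrt (2 * x / π)) atTop (nhds 1) := by
  have hlim := (tendsto_integral_exp_neg_sq_div_sqrt.comp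
    (tendsto_id.const_mul_atTop two_pos)).const_mul (2 / √π)
  rw [show 2 / √π * (√π / 2) = 1 by field_simp [(sqrt_pos.2 pi_pos).ne']] at hlim
  refine hlim.congr' ?_
  filter_upwards [eventually_gt_atTop 0] with x hx
  rw [Function.comp_apply, id, sqrt_div' _ pi_pos.le, ← mul_div_assoc,
    besselK0_mul_exp_mul_sqrt hx]
  ring
end

section
/- Let $(\Omega,\mathcal F,\mathbb P)$ be a probability space, $X:\Omega\to\mathbb{R}^2$ a random variable with $X=x_0+\sigma B$ where $x_0\neq 0$, $\sigma>0$ and $B\sim N(0,\tau I_2)$ a two-dimensional centered Gaussian with variance $\tau>0$ per coordinate. Then $\sup_{\tau>0}\mathbb{E}\big[\,\big|\log|X|\,\big|\;;\;|X|\le |x_0|/2\big] < \infty$. -/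
/-!
For `‖z‖ ≤ ‖x₀‖ / 2` the point `z` lies at distance at least `ρ = ‖x₀‖ / 2` from `x₀`, so the
Gaussian density at `z` is at most `(2πσ²)⁻¹ · τ⁻¹ e^{-a/τ}` with `a = ρ² / (2σ²)`; since
`u e^{-u} ≤ e⁻¹`, this is at most `e⁻¹ / (πρ²)` whatever `τ` is. The truncated log-moment is
therefore bounded by that constant times `∫_{‖z‖ ≤ ρ} |log ‖z‖| dz`, which is finite because
`|log r| ≤ C r^{-1/2}` near `0` and `r^{-1/2}` is integrable near the origin of any nonzero
finite-dimensional space.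
-/

open MeasureTheory Real Set Metric Module
open scoped ENNReal

lemma Real.abs_log_le_mul_rpow_neg_half {t r : ℝ} (ht : 0 ≤ t) (htr : t ≤ r) :
    |log t| ≤ 2 * (1 + r) * t ^ (-(1 / 2) : ℝ) := by
  rcases ht.eq_or_lt with rfl | ht
  · simp
  have h_neg_log : -log t ≤ 2 * t ^ (-(1 / 2) : ℝ) := by
    have := log_le_rpow_div (inv_nonneg.2 ht.le) (by norm_num : (0 : ℝ) < 1 / 2)
    rw [log_inv, inv_rpow ht.le, ← rpow_neg ht.le] at this
    linarith
  have h_log : log t ≤ 2 * r * t ^ (-(1 / 2) : ℝ) := by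
    have := log_le_rpow_div ht.le (by norm_num : (0 : ℝ) < 1 / 2)
    have hsplit : t ^ (1 / 2 : ℝ) = t * t ^ (-(1 / 2) : ℝ) := by
      rw [← rpow_one_add' ht.le (by norm_num)]; norm_num
    have : t * t ^ (-(1 / 2) : ℝ) ≤ r * t ^ (-(1 / 2) : ℝ) :=
      mul_le_mul_of_nonneg_right htr (rpow_nonneg ht.le _)
    linarith
  have h_rpow : 0 ≤ t ^ (-(1 / 2) : ℝ) := rpow_nonneg ht.le _
  have h_mul_rpow : 0 ≤ r * t ^ (-(1 / 2) : ℝ) := mul_nonneg (ht.le.trans htr) h_rpow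
  exact abs_le.2 ⟨by linarith, by linarith⟩

lemma Real.inv_mul_exp_neg_div_le {a : ℝ} (ha : 0 < a) (τ : ℝ) :
    τ⁻¹ * exp (-(a / τ)) ≤ exp (-1) / a := by
  rw [le_div_iff₀ ha]
  calc τ⁻¹ * exp (-(a / τ)) * a = a / τ * exp (-(a / τ)) := by ring
    _ ≤ exp (-1) := mul_exp_neg_le_exp_neg_one _

lemma Real.heatKernel_le {s τ ρ d : ℝ} (hs : 0 < s) (hτ : 0 < τ) (hρ : 0 < ρ) (hρd : ρ ≤ d) :
    (2 * π * s * τ)⁻¹ * exp (-d ^ 2 / (2 * s * τ)) ≤ exp (-1) / (π * ρ ^ 2) := by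
  have hexp : exp (-d ^ 2 / (2 * s * τ)) ≤ exp (-(ρ ^ 2 / (2 * s) / τ)) := by
    gcongr
    rw [div_div, neg_div]
    gcongr
  calc (2 * π * s * τ)⁻¹ * exp (-d ^ 2 / (2 * s * τ))
      ≤ (2 * π * s)⁻¹ * (τ⁻¹ * exp (-(ρ ^ 2 / (2 * s) / τ))) := by
        rw [mul_inv (2 * π * s), mul_assoc]; gcongr
    _ ≤ (2 * π * s)⁻¹ * (exp (-1) / (ρ ^ 2 / (2 * s))) := by
        gcongr; exact inv_mul_exp_neg_div_le (by positivity) τ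
    _ = exp (-1) / (π * ρ ^ 2) := by field_simp

lemma heatKernel_le_of_norm_le_half {E : Type*} [SeminormedAddCommGroup E] {x₀ z : E}
    (hx₀ : 0 < ‖x₀‖) (hz : ‖z‖ ≤ ‖x₀‖ / 2) {σ τ : ℝ} (hσ : σ ≠ 0) (hτ : 0 < τ) :
    (2 * π * σ ^ 2 * τ)⁻¹ * exp (-‖z - x₀‖ ^ 2 / (2 * σ ^ 2 * τ))
      ≤ exp (-1) / (π * (‖x₀‖ / 2) ^ 2) := by
  refine heatKernel_le (by positivity) hτ (by positivity) ?_
  have := norm_sub_norm_le x₀ z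
  rw [norm_sub_rev] at this
  linarith

section LogNorm

variable {E : Type*} [NormedAddCommGroup E] [NormedSpace ℝ E] [FiniteDimensional ℝ E]
  [MeasurableSpace E] [BorelSpace E] (μ : Measure E) [μ.IsAddHaarMeasure]

theorem locallyIntegrable_log_norm (hd : 1 ≤ finrank ℝ E) :
    LocallyIntegrable (fun x : E ↦ log ‖x‖) μ := by
  rw [locallyIntegrable_iff]
  intro K hK
  obtain ⟨r, -, hr⟩ := hK.isBounded.exists_pos_norm_lt
  refine (integrableOn_ball_of_norm_le_rpow hd (C := 2 * (1 + r)) (α := 1 / 2) ?_ ?_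
    (measurable_log.comp measurable_norm).aestronglyMeasurable).mono_set
    fun x hx ↦ mem_ball_zero_iff.2 (hr x hx)
  · exact lt_of_lt_of_le (by norm_num) (Nat.one_le_cast.2 hd)
  · refine ae_restrict_of_forall_mem measurableSet_ball fun x hx ↦ ?_
    rw [norm_eq_abs]
    exact abs_log_le_mul_rpow_neg_half (norm_nonneg x) (mem_ball_zero_iff.1 hx).le

theorem setLIntegral_closedBall_abs_log_norm_lt_top (hd : 1 ≤ finrank ℝ E) (R : ℝ) :
    ∫⁻ x in closedBall 0 R, ENNReal.ofReal |log ‖x‖| ∂μ < ∞ := by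
  simpa [HasFiniteIntegral, enorm_eq_ofReal_abs] using
    ((locallyIntegrable_log_norm μ hd).integrableOn_isCompact
      (isCompact_closedBall 0 R)).hasFiniteIntegral

end LogNorm

section WithDensity

variable {α β : Type*} [MeasurableSpace α] [MeasurableSpace β]

lemma AEMeasurable.of_map_eq_withDensity {P : Measure α} {X : α → β} {μ : Measure β} [NeZero μ]
    {f : β → ℝ≥0∞} (hf : AEMeasurable f μ) (hf_ne : ∀ z, f z ≠ 0)
    (hX : P.map X = μ.withDensity f) : AEMeasurable X P := by
  refine .of_map_ne_zero fun h ↦ ?_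
  rw [hX, withDensity_eq_zero_iff hf] at h
  obtain ⟨z, hz⟩ := h.exists
  exact hf_ne z hz

lemma setLIntegral_withDensity_le {μ : Measure β} {f g : β → ℝ≥0∞} (hf : Measurable f)
    (hg : Measurable g) {s : Set β} (hs : MeasurableSet s) {c : ℝ≥0∞} (hfc : ∀ z ∈ s, f z ≤ c) :
    ∫⁻ z in s, g z ∂μ.withDensity f ≤ c * ∫⁻ z in s, g z ∂μ := by
  rw [setLIntegral_withDensity_eq_setLIntegral_mul _ hf hg hs, ← lintegral_const_mul _ hg]
  exact setLIntegral_mono (by fun_prop) fun z hz ↦ mul_le_mul_left (hfc z hz) _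

end WithDensity

theorem gaussian_log_moment_uniform_bound (x0 : EuclideanSpace ℝ (Fin 2)) (hx0 : x0 ≠ 0)
    (σ : ℝ) (hσ : 0 < σ) :
    ∃ C : NNReal, ∀ (Ω : Type) (_ : MeasurableSpace Ω) (P : Measure Ω),
      IsProbabilityMeasure P → ∀ (X : Ω → EuclideanSpace ℝ (Fin 2)) (τ : ℝ), 0 < τ →
      P.map X = volume.withDensity (fun z : EuclideanSpace ℝ (Fin 2) =>
        ENNReal.ofReal ((2 * π * σ ^ 2 * τ)⁻¹ * Real.exp (-‖z - x0‖ ^ 2 / (2 * σ ^ 2 * τ)))) →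
      (∫⁻ ω, {ω' | ‖X ω'‖ ≤ ‖x0‖ / 2}.indicator
          (fun ω' => ENNReal.ofReal |Real.log ‖X ω'‖|) ω ∂P) ≤ C := by
  have hx0' : 0 < ‖x0‖ := norm_pos_iff.2 hx0
  set R := ‖x0‖ / 2
  set g : EuclideanSpace ℝ (Fin 2) → ℝ≥0∞ := fun z ↦ ENNReal.ofReal |log ‖z‖|
  have hg : Measurable g := by fun_prop
  have hfin := setLIntegral_closedBall_abs_log_norm_lt_top
    (volume : Measure (EuclideanSpace ℝ (Fin 2))) (by simp) R
  refine ⟨(ENNReal.ofReal (exp (-1) / (π * R ^ 2)) * ∫⁻ z in closedBall 0 R, g z).toNNReal, ?_⟩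
  intro Ω _ P _ X τ hτ hmap
  have hf : Measurable fun z : EuclideanSpace ℝ (Fin 2) ↦
      ENNReal.ofReal ((2 * π * σ ^ 2 * τ)⁻¹ * exp (-‖z - x0‖ ^ 2 / (2 * σ ^ 2 * τ))) := by
    fun_prop
  have hX : AEMeasurable X P := .of_map_eq_withDensity hf.aemeasurable
    (fun z ↦ (ENNReal.ofReal_pos.2 (by positivity)).ne') hmap
  calc ∫⁻ ω, {ω' | ‖X ω'‖ ≤ R}.indicator (fun ω' ↦ g (X ω')) ω ∂P
      = ∫⁻ z in closedBall 0 R, g z ∂(P.map X) := by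
        rw [← lintegral_indicator measurableSet_closedBall, lintegral_map' (hg.indicator measurableSet_closedBall).aemeasurable hX]
        simp [indicator]
    _ ≤ _ := by
        rw [hmap, ENNReal.coe_toNNReal (by finiteness)]
        exact setLIntegral_withDensity_le hf hg measurableSet_closedBall fun z hz ↦
          ENNReal.ofReal_le_ofReal <| heatKernel_le_of_norm_le_half hx0'
            (mem_closedBall_zero_iff.1 hz) hσ.ne' hτ
end
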